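/- Let A₁ and A₂ be regular wiretap sets in a finite directed acyclic graph with source s. Then the equivalence class of A₁ is dominated by the equivalence class of A₂ (Cl(A₁) ≺ Cl(A₂)) if and only if A₁ ≺ A₂. -/

import Mathlib

open Finset

/-- Consecutive edges in the list match head-to-tail. -/
def EChain {V E : Type*} (tl hd : E → V) (p : List E) : Prop :=
  p.Chain' (fun d e => hd d = tl e)

/-- A (nonempty) directed path of edges starting at node `s`. -/
def PathFrom {V E : Type*} (tl hd : E → V) (s : V) (p : List E) : Prop :=
  p ≠ [] ∧ EChain tl hd p ∧ ∀ e ∈ p.head?, tl e = s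

/-- The directed graph is acyclic: no nonempty edge-chain returns to its start. -/
def Acyclic {V E : Type*} (tl hd : E → V) : Prop :=
  ∀ p : List E, p ≠ [] → EChain tl hd p →
    ∀ d ∈ p.head?, ∀ e ∈ p.getLast?, hd e ≠ tl d

/-- `B` separates the edge set `A` from `s`: every directed path from `s`
ending with an edge of `A` passes through an edge of `B` (i.e. `B` is a cut
between `s` and `A`). -/
def Separates {V E : Type*} (tl hd : E → V) (s : V) (A B : Finset E) : Prop :=
  ∀ p : List E, PathFrom tl hd s p → (∃ e ∈ p.getLast?, e ∈ A) → ∃ b ∈ B, b ∈ p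

/-- The minimum cut capacity between `s` and the edge set `A`. -/
noncomputable def mincut {V E : Type*} [Fintype E] (tl hd : E → V) (s : V)
    (A : Finset E) : ℕ :=
  sInf {n | ∃ B : Finset E, Separates tl hd s A B ∧ B.card = n}

/-- `B` is a minimum cut between `s` and the edge set `A`. -/
def IsMinCut {V E : Type*} [Fintype E] (tl hd : E → V) (s : V) (A B : Finset E) : Prop :=
  Separates tl hd s A B ∧ B.card = mincut tl hd s A

/-- An edge set is regular if its cardinality equals its minimum cut capacity from `s`. -/
def Regular {V E : Type*} [Fintype E] (tl hd : E → V) (s : V) (A : Finset E) : Prop :=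
  A.card = mincut tl hd s A

/-- `A ∼ A'`: the two edge sets have a common minimum cut from `s`. -/
def EquivSets {V E : Type*} [Fintype E] (tl hd : E → V) (s : V) (A A' : Finset E) : Prop :=
  ∃ C : Finset E, IsMinCut tl hd s A C ∧ IsMinCut tl hd s A' C

/-- `A₁ ≺ A₂`: `|A₁| < |A₂|` and some minimum cut between `s` and `A₂`
also separates `A₁` from `s`. -/
def Dominates {V E : Type*} [Fintype E] (tl hd : E → V) (s : V) (A₁ A₂ : Finset E) : Prop :=
  A₁.card < A₂.card ∧
    ∃ C : Finset E, IsMinCut tl hd s A₂ C ∧ Separates tl hd s A₁ C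

/-- A directed path of edges from node `s` to node `t`. -/
def NPathFromTo {V E : Type*} (tl hd : E → V) (s t : V) (p : List E) : Prop :=
  PathFrom tl hd s p ∧ ∀ e ∈ p.getLast?, hd e = t

/-- `B` is a cut between the nodes `s` and `t`. -/
def NSeparates {V E : Type*} (tl hd : E → V) (s t : V) (B : Finset E) : Prop :=
  ∀ p : List E, NPathFromTo tl hd s t p → ∃ b ∈ B, b ∈ p

/-- The minimum cut capacity between the nodes `s` and `t`. -/
noncomputable def nmincut {V E : Type*} [Fintype E] (tl hd : E → V) (s t : V) : ℕ :=
  sInf {n | ∃ B : Finset E, NSeparates tl hd s t B ∧ B.card = n}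

/-- `B` is a minimum cut between the nodes `s` and `t`. -/
def IsNodeMinCut {V E : Type*} [Fintype E] (tl hd : E → V) (s t : V) (B : Finset E) : Prop :=
  NSeparates tl hd s t B ∧ B.card = nmincut tl hd s t

/-- `d ≤ e` for edges: there is a directed path starting with `d` and ending with `e`
(in particular `d ≤ d`). -/
def EdgeLe {V E : Type*} (tl hd : E → V) (d e : E) : Prop :=
  ∃ p : List E, EChain tl hd p ∧ p.head? = some d ∧ p.getLast? = some e

/-- A family of pairwise edge-disjoint paths. -/
def EdgeDisjoint {E : Type*} {n : ℕ} (P : Fin n → List E) : Prop :=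
  ∀ i j, i ≠ j → List.Disjoint (P i) (P j)

/-- The primary minimum cut between nodes `s` and `t`: a minimum cut separating
every minimum cut between `s` and `t` from `s`. -/
def IsPrimaryNodeMinCut {V E : Type*} [Fintype E] (tl hd : E → V) (s t : V)
    (C : Finset E) : Prop :=
  IsNodeMinCut tl hd s t C ∧
    ∀ C' : Finset E, IsNodeMinCut tl hd s t C' → Separates tl hd s C' C

/-- The primary minimum cut between `s` and an edge set `A`. -/
def IsPrimaryMinCut {V E : Type*} [Fintype E] (tl hd : E → V) (s : V)
    (A C : Finset E) : Prop :=
  IsMinCut tl hd s A C ∧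
    ∀ C' : Finset E, IsMinCut tl hd s A C' → Separates tl hd s C' C

/-- The equivalence class (within the collection `𝒜`) of the wiretap set `A`
under the relation `∼`. -/
def ClassOf {V E : Type*} [Fintype E] (tl hd : E → V) (s : V)
    (𝒜 : Finset (Finset E)) (A : Finset E) : Set (Finset E) :=
  {A' | A' ∈ 𝒜 ∧ EquivSets tl hd s A A'}

/-- Domination amongst (distinct) equivalence classes: some common minimum cut of all
the sets in `C₂` separates every set in `C₁` from `s`. -/
def ClDominates {V E : Type*} [Fintype E] (tl hd : E → V) (s : V)
    (C₁ C₂ : Set (Finset E)) : Prop :=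
  C₁ ≠ C₂ ∧ ∃ CUT : Finset E,
    (∀ A ∈ C₂, IsMinCut tl hd s A CUT) ∧ (∀ A ∈ C₁, Separates tl hd s A CUT)


/-!
Minimum cuts uncross: if `B₁` is a minimum cut for `A` that also separates `A'`, and `B₂` is a
minimum cut for `A'`, then the edges of `B₁ ∪ B₂` that a path from `s` meets first form a minimum
cut for `A`, by a submodularity count. Folding this over all
minimum cuts gives a primary minimum cut `P` of `A₂`, which every minimum cut of `A₂` is
separated by; hence `P` is a common minimum cut of the whole class of `A₂`. If `P` separates `A₁`,
uncrossing `P` with a common minimum cut `D` of `A₁ ∼ A₁'` shows that `P` separates `D`, hence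
`A₁'`. Regularity turns `∼` into equality of cardinalities, which rules out `Cl(A₁) = Cl(A₂)`.
-/

lemma List.exists_eq_append_cons_of_last {α : Type*} (P : α → Prop) {l : List α}
    (h : ∃ x ∈ l, P x) : ∃ l₁ b l₂, l = l₁ ++ b :: l₂ ∧ P b ∧ ∀ x ∈ l₂, ¬ P x := by
  classical
  have hsome : (l.reverse.find? fun x => decide (P x)).isSome :=
    List.find?_isSome.mpr (by simpa using h)
  obtain ⟨b, hb⟩ := Option.isSome_iff_exists.mp hsome
  obtain ⟨hPb, l₂, l₁, hrev, hl₂⟩ := List.find?_eq_some_iff_append.mp hb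
  refine ⟨l₁.reverse, b, l₂.reverse, ?_, by simpa using hPb, fun x hx => by
    simpa using hl₂ x (List.mem_reverse.mp hx)⟩
  simpa using congrArg List.reverse hrev

section Cuts

variable {V E : Type*} {tl hd : E → V} {s : V}

lemma PathFrom.left_of_append {l₁ l₂ : List E} (h : PathFrom tl hd s (l₁ ++ l₂))
    (hl₁ : l₁ ≠ []) : PathFrom tl hd s l₁ := by
  obtain ⟨-, hchain, hhead⟩ := h
  refine ⟨hl₁, (List.isChain_append.mp hchain).1, fun e he => hhead e ?_⟩
  rwa [List.head?_append_of_ne_nil _ hl₁]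

lemma PathFrom.append_cons {q l : List E} {b : E} (hq : PathFrom tl hd s (q ++ [b]))
    (hl : EChain tl hd (b :: l)) : PathFrom tl hd s (q ++ b :: l) := by
  obtain ⟨-, hchain, hhead⟩ := hq
  obtain ⟨hq, -, hqb⟩ := List.isChain_append.mp hchain
  refine ⟨by simp, List.isChain_append.mpr ⟨hq, hl, fun x hx y hy => ?_⟩,
    fun e he => hhead e (by simpa [List.head?_append] using he)⟩
  exact hqb x hx y (by simpa using hy)

lemma separates_refl (A : Finset E) : Separates tl hd s A A := by
  rintro p - ⟨e, he, heA⟩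
  exact ⟨e, heA, List.mem_of_mem_getLast? he⟩

lemma Separates.trans {A B C : Finset E} (hAB : Separates tl hd s A B)
    (hBC : Separates tl hd s B C) : Separates tl hd s A C := by
  intro p hp hA
  obtain ⟨b, hb, hbp⟩ := hAB p hp hA
  obtain ⟨l₁, l₂, rfl⟩ := List.append_of_mem hbp
  have hpre : PathFrom tl hd s (l₁ ++ [b]) :=
    PathFrom.left_of_append (l₂ := l₂) (by simpa using hp) (by simp)
  obtain ⟨c, hc, hcp⟩ := hBC _ hpre ⟨b, by simp, hb⟩
  exact ⟨c, hc, List.IsPrefix.subset ⟨l₂, by simp⟩ hcp⟩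

variable (tl hd s) in
open Classical in
noncomputable def frontEdges (U : Finset E) : Finset E :=
  {e ∈ U | ∃ q : List E, PathFrom tl hd s (q ++ [e]) ∧ ∀ x ∈ q, x ∉ U}

lemma mem_frontEdges {U : Finset E} {e : E} :
    e ∈ frontEdges tl hd s U ↔
      e ∈ U ∧ ∃ q : List E, PathFrom tl hd s (q ++ [e]) ∧ ∀ x ∈ q, x ∉ U := by
  classical
  simp [frontEdges]

lemma frontEdges_subset (U : Finset E) : frontEdges tl hd s U ⊆ U :=
  fun _ he => (mem_frontEdges.mp he).1

lemma Separates.frontEdges_of_subset {X B U : Finset E} (hsep : Separates tl hd s X B)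
    (hBU : B ⊆ U) : Separates tl hd s X (frontEdges tl hd s U) := by
  classical
  intro p hp hX
  obtain ⟨b, hb, hbp⟩ := hsep p hp hX
  have hsome : (p.find? fun x => decide (x ∈ U)).isSome :=
    List.find?_isSome.mpr ⟨b, hbp, by simpa using hBU hb⟩
  obtain ⟨c, hc⟩ := Option.isSome_iff_exists.mp hsome
  obtain ⟨hcU, l₁, l₂, rfl, hl₁⟩ := List.find?_eq_some_iff_append.mp hc
  have hpre : PathFrom tl hd s (l₁ ++ [c]) :=
    PathFrom.left_of_append (l₂ := l₂) (by simpa using hp) (by simp)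
  refine ⟨c, mem_frontEdges.mpr ⟨by simpa using hcU, l₁, hpre, fun x hx => ?_⟩, by simp⟩
  simpa using hl₁ x hx

lemma Separates.sdiff_frontEdges_union_inter [DecidableEq E] {A B₁ B₂ : Finset E}
    (h₁ : Separates tl hd s A B₁) (h₂ : Separates tl hd s A B₂) :
    Separates tl hd s A ((B₁ ∪ B₂) \ frontEdges tl hd s (B₁ ∪ B₂) ∪ B₁ ∩ B₂) := by
  intro p hp hA
  by_contra! hmiss
  obtain ⟨b, hb, hbp⟩ := h₁ p hp hA
  obtain ⟨l₁, ℓ, l₂, rfl, hℓ, hl₂⟩ :=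
    List.exists_eq_append_cons_of_last (· ∈ B₁ ∪ B₂) ⟨b, hbp, mem_union_left _ hb⟩
  have hℓp : ℓ ∈ l₁ ++ ℓ :: l₂ := by simp
  have hℓF : ℓ ∈ frontEdges tl hd s (B₁ ∪ B₂) := by
    by_contra hℓF
    exact hmiss ℓ (mem_union_left _ (mem_sdiff.mpr ⟨hℓ, hℓF⟩)) hℓp
  have hℓ₁₂ : ℓ ∉ B₁ ∩ B₂ := fun h => hmiss ℓ (mem_union_right _ h) hℓp
  -- one of the two cuts misses `ℓ`; reroute `p` through the path reaching `ℓ` first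
  obtain ⟨B, hB, hℓB, hBU⟩ : ∃ B, Separates tl hd s A B ∧ ℓ ∉ B ∧ B ⊆ B₁ ∪ B₂ := by
    rcases mem_union.mp hℓ with h | h
    · exact ⟨B₂, h₂, fun h' => hℓ₁₂ (mem_inter.mpr ⟨h, h'⟩), subset_union_right⟩
    · exact ⟨B₁, h₁, fun h' => hℓ₁₂ (mem_inter.mpr ⟨h', h⟩), subset_union_left⟩
  obtain ⟨-, q, hq, hqU⟩ := mem_frontEdges.mp hℓF
  have hchain : EChain tl hd (ℓ :: l₂) := (List.isChain_append.mp hp.2.1).2.1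
  have hr : PathFrom tl hd s (q ++ ℓ :: l₂) := hq.append_cons hchain
  have hrA : ∃ e ∈ (q ++ ℓ :: l₂).getLast?, e ∈ A := by
    simpa [List.getLast?_append, List.getLast?_cons] using hA
  obtain ⟨c, hcB, hcr⟩ := hB _ hr hrA
  simp only [List.mem_append, List.mem_cons] at hcr
  rcases hcr with hcq | rfl | hcl₂
  · exact hqU c hcq (hBU hcB)
  · exact hℓB hcB
  · exact hl₂ c hcl₂ (hBU hcB)

variable [Fintype E]

lemma mincut_le_card {A B : Finset E} (h : Separates tl hd s A B) : mincut tl hd s A ≤ B.card :=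
  Nat.sInf_le ⟨B, h, rfl⟩

variable (tl hd s) in
lemma exists_isMinCut (A : Finset E) : ∃ C, IsMinCut tl hd s A C := by
  have hne : {n | ∃ B : Finset E, Separates tl hd s A B ∧ B.card = n}.Nonempty :=
    ⟨_, univ, fun p hp _ => ⟨p.head hp.1, mem_univ _, List.head_mem _⟩, rfl⟩
  obtain ⟨C, hC, hcard⟩ := Nat.sInf_mem hne
  exact ⟨C, hC, hcard⟩

/-- Uncrossing: with `F` the front edges of `B₁ ∪ B₂`, we have
`|F| + |(B₁ ∪ B₂) \ F ∪ B₁ ∩ B₂| ≤ |B₁| + |B₂|`, while the two summands are cuts for `A` and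
`A'`, so at least `|B₁|` and `|B₂|`. -/
lemma IsMinCut.frontEdges_union [DecidableEq E] {A A' B₁ B₂ : Finset E}
    (h₁ : IsMinCut tl hd s A B₁) (hA' : Separates tl hd s A' B₁) (h₂ : IsMinCut tl hd s A' B₂) :
    IsMinCut tl hd s A (frontEdges tl hd s (B₁ ∪ B₂)) := by
  set F := frontEdges tl hd s (B₁ ∪ B₂)
  have hF : Separates tl hd s A F := h₁.1.frontEdges_of_subset subset_union_left
  have hFU : F ⊆ B₁ ∪ B₂ := frontEdges_subset _
  have hlow₁ : B₁.card ≤ F.card := h₁.2 ▸ mincut_le_card hF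
  have hlow₂ : B₂.card ≤ ((B₁ ∪ B₂) \ F ∪ B₁ ∩ B₂).card :=
    h₂.2 ▸ mincut_le_card (hA'.sdiff_frontEdges_union_inter h₂.1)
  have hrest := card_union_le ((B₁ ∪ B₂) \ F) (B₁ ∩ B₂)
  rw [card_sdiff_of_subset hFU] at hrest
  have := card_le_card hFU
  have := card_union_add_card_inter B₁ B₂
  exact ⟨hF, by rw [← h₁.2]; omega⟩

variable (tl hd s) in
lemma exists_isPrimaryMinCut (A : Finset E) : ∃ P, IsPrimaryMinCut tl hd s A P := by
  classical
  suffices h : ∀ S : Finset (Finset E), ∃ P, IsMinCut tl hd s A P ∧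
      ∀ C ∈ S, IsMinCut tl hd s A C → Separates tl hd s C P by
    obtain ⟨P, hP, hsep⟩ := h univ
    exact ⟨P, hP, fun C => hsep C (mem_univ C)⟩
  intro S
  induction S using Finset.induction_on with
  | empty =>
    obtain ⟨P, hP⟩ := exists_isMinCut tl hd s A
    exact ⟨P, hP, by simp⟩
  | @insert C S _ ih =>
    obtain ⟨P, hP, hsep⟩ := ih
    by_cases hC : IsMinCut tl hd s A C
    · refine ⟨frontEdges tl hd s (P ∪ C), hP.frontEdges_union hP.1 hC, ?_⟩
      rintro D hD hDmin
      rcases mem_insert.mp hD with rfl | hD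
      · exact (separates_refl D).frontEdges_of_subset subset_union_right
      · exact (hsep D hD hDmin).trans ((separates_refl P).frontEdges_of_subset subset_union_left)
    · exact ⟨P, hP, fun D hD hDmin => hsep D ((mem_insert.mp hD).resolve_left
        (by rintro rfl; exact hC hDmin)) hDmin⟩

lemma EquivSets.mincut_eq {A A' : Finset E} (h : EquivSets tl hd s A A') :
    mincut tl hd s A = mincut tl hd s A' := by
  obtain ⟨C, hC, hC'⟩ := h
  rw [← hC.2, hC'.2]

lemma EquivSets.symm {A A' : Finset E} (h : EquivSets tl hd s A A') :
    EquivSets tl hd s A' A :=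
  let ⟨C, hC, hC'⟩ := h
  ⟨C, hC', hC⟩

lemma IsPrimaryMinCut.isMinCut_of_equivSets {A A' P : Finset E}
    (hP : IsPrimaryMinCut tl hd s A P) (h : EquivSets tl hd s A A') :
    IsMinCut tl hd s A' P := by
  obtain ⟨C, hC, hC'⟩ := h
  exact ⟨hC'.1.trans (hP.2 C hC), by rw [hP.1.2, ← hC.2, hC'.2]⟩

lemma IsPrimaryMinCut.separates_of_equivSets {A₁ A₁' A₂ P : Finset E}
    (hP : IsPrimaryMinCut tl hd s A₂ P) (hA₁ : Separates tl hd s A₁ P)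
    (h : EquivSets tl hd s A₁ A₁') : Separates tl hd s A₁' P := by
  classical
  obtain ⟨D, hD, hD'⟩ := h
  have hDP : Separates tl hd s D P :=
    ((separates_refl D).frontEdges_of_subset subset_union_right).trans
      (hP.2 _ (hP.1.frontEdges_union hA₁ hD))
  exact hD'.1.trans hDP

lemma equivSets_equivalence : Equivalence (EquivSets (V := V) (E := E) tl hd s) where
  refl A := by
    obtain ⟨C, hC⟩ := exists_isMinCut tl hd s A
    exact ⟨C, hC, hC⟩
  symm := EquivSets.symm
  trans {A B C} hAB hBC := by
    obtain ⟨P, hP⟩ := exists_isPrimaryMinCut tl hd s B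
    exact ⟨P, hP.isMinCut_of_equivSets hAB.symm, hP.isMinCut_of_equivSets hBC⟩

lemma mem_classOf_self {𝒜 : Finset (Finset E)} {A : Finset E} (hA : A ∈ 𝒜) :
    A ∈ ClassOf tl hd s 𝒜 A :=
  ⟨hA, equivSets_equivalence.refl A⟩

lemma classOf_eq_of_equivSets {𝒜 : Finset (Finset E)} {A A' : Finset E}
    (h : EquivSets tl hd s A A') : ClassOf tl hd s 𝒜 A = ClassOf tl hd s 𝒜 A' := by
  ext B
  exact and_congr_right fun _ =>
    ⟨equivSets_equivalence.trans h.symm, equivSets_equivalence.trans h⟩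

end Cuts

theorem clDominates_iff_dominates_general {V E : Type*} [Fintype E]
    (tl hd : E → V) (s : V)
    (𝒜 : Finset (Finset E)) (hreg : ∀ A ∈ 𝒜, Regular tl hd s A)
    (A₁ A₂ : Finset E) (hA₁ : A₁ ∈ 𝒜) (hA₂ : A₂ ∈ 𝒜) :
    ClDominates tl hd s (ClassOf tl hd s 𝒜 A₁) (ClassOf tl hd s 𝒜 A₂) ↔
      Dominates tl hd s A₁ A₂ := by
  constructor
  · rintro ⟨hne, C, hC₂, hC₁⟩
    have hC : IsMinCut tl hd s A₂ C := hC₂ A₂ (mem_classOf_self hA₂)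
    have hsep : Separates tl hd s A₁ C := hC₁ A₁ (mem_classOf_self hA₁)
    have hle : A₁.card ≤ A₂.card := by
      rw [hreg A₁ hA₁, hreg A₂ hA₂, ← hC.2]
      exact mincut_le_card hsep
    refine ⟨hle.lt_of_ne fun hcard => hne ?_, C, hC, hsep⟩
    refine classOf_eq_of_equivSets ⟨C, ⟨hsep, ?_⟩, hC⟩
    rw [hC.2, ← hreg A₂ hA₂, ← hcard, hreg A₁ hA₁]
  · rintro ⟨hlt, C, hC, hsep⟩
    obtain ⟨P, hP⟩ := exists_isPrimaryMinCut tl hd s A₂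
    refine ⟨fun hcl => ?_, P, fun A hA => hP.isMinCut_of_equivSets hA.2,
      fun A hA => hP.separates_of_equivSets (hsep.trans (hP.2 C hC)) hA.2⟩
    obtain ⟨-, h⟩ : A₁ ∈ ClassOf tl hd s 𝒜 A₂ := hcl ▸ mem_classOf_self hA₁
    exact hlt.ne (by rw [hreg A₁ hA₁, hreg A₂ hA₂, h.mincut_eq])

/-- `Cl(A₁) ≺ Cl(A₂)` iff `A₁ ≺ A₂`. -/
theorem clDominates_iff_dominates {V E : Type*} [Fintype E]
    (tl hd : E → V) (s : V)
    (hacy : Acyclic tl hd) (hsrc : ∀ e : E, hd e ≠ s)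
    (𝒜 : Finset (Finset E)) (hreg : ∀ A ∈ 𝒜, Regular tl hd s A)
    (A₁ A₂ : Finset E) (hA₁ : A₁ ∈ 𝒜) (hA₂ : A₂ ∈ 𝒜) :
    ClDominates tl hd s (ClassOf tl hd s 𝒜 A₁) (ClassOf tl hd s 𝒜 A₂) ↔
      Dominates tl hd s A₁ A₂ :=
  clDominates_iff_dominates_general tl hd s 𝒜 hreg A₁ A₂ hA₁ hA₂
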